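/- For every Nayak quantum finite automaton (NQFA) with n states, there exists a generalized probabilistic finite automaton (GPFA) with O(n^2) states (i.e., at most n^2 + c states for a fixed constant c) whose acceptance value function on strings equals the acceptance probability function of the NQFA. -/

import Mathlib

/-! The configuration of an NQFA that matters for acceptance is the Hermitian density matrix of
its non-halted part together with the acceptance probability accumulated so far, and reading a
symbol acts on this pair by a real-linear map. Hermitian `n × n` matrices form a real vector space
of dimension `n²`, so in a basis of this `(n² + 1)`-dimensional space the steps become matrices
of a GPFA, whose final vector reads off the acceptance coordinate. -/

open Matrix
noncomputable section

/-- A generalized probabilistic finite automaton over alphabet `Alph`: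
an initial real row vector, a real transition matrix per symbol, and a final column vector. -/
structure GPFA (Alph : Type) where
  m : ℕ
  v : Fin m → ℝ
  A : Alph → Matrix (Fin m) (Fin m) ℝ
  f : Fin m → ℝ

/-- The value of a GPFA on a word `w = σ₁⋯σ_k` is `v A_{σ₁} ⋯ A_{σ_k} f`. -/
def GPFA.val {Alph : Type} (G : GPFA Alph) (w : List Alph) : ℝ :=
  G.v ⬝ᵥ ((w.map G.A).prod).mulVec G.f
/-- A Nayak quantum finite automaton: on each symbol it applies a unitary `U σ`,
then the projective measurement `{P σ i}`, then the projective measurement with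
outcomes accept/reject/non-halting given by orthogonal projections `Pa, Pr, Pn`. -/
structure NQFA (Alph : Type) where
  n : ℕ
  U : Alph → Matrix (Fin n) (Fin n) ℂ
  hU : ∀ σ, U σ ∈ Matrix.unitaryGroup (Fin n) ℂ
  outcomes : ℕ
  P : Alph → Fin outcomes → Matrix (Fin n) (Fin n) ℂ
  hP_herm : ∀ σ i, (P σ i).IsHermitian
  hP_idem : ∀ σ i, P σ i * P σ i = P σ i
  hP_sum : ∀ σ, ∑ i, P σ i = 1
  Pa : Matrix (Fin n) (Fin n) ℂ
  Pr : Matrix (Fin n) (Fin n) ℂ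
  Pn : Matrix (Fin n) (Fin n) ℂ
  hPa : Pa.IsHermitian ∧ Pa * Pa = Pa
  hPr : Pr.IsHermitian ∧ Pr * Pr = Pr
  hPn : Pn.IsHermitian ∧ Pn * Pn = Pn
  hHalt_sum : Pa + Pr + Pn = 1
  init : Fin n → ℂ
  hinit : ∑ i, Complex.normSq (init i) = 1

namespace NQFA

variable {Alph : Type} (M : NQFA Alph)

/-- The initial density matrix `|q₀⟩⟨q₀|`. -/
def rho0 : Matrix (Fin M.n) (Fin M.n) ℂ :=
  fun i j => M.init i * star (M.init j)

/-- The post-operation density matrix for one symbol: apply the unitary,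
then sum over the outcomes of the symbol's projective measurement. -/
def postOp (σ : Alph) (X : Matrix (Fin M.n) (Fin M.n) ℂ) :
    Matrix (Fin M.n) (Fin M.n) ℂ :=
  ∑ i, M.P σ i * (M.U σ * X * (M.U σ)ᴴ) * (M.P σ i)ᴴ

/-- One full computation step on the state `(ρ, p_acc, p_rej)`: the non-halted
density matrix together with accumulated accept and reject probabilities. -/
def step (s : Matrix (Fin M.n) (Fin M.n) ℂ × ℝ × ℝ) (σ : Alph) :
    Matrix (Fin M.n) (Fin M.n) ℂ × ℝ × ℝ :=
  (M.Pn * M.postOp σ s.1 * M.Pnᴴ,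
   s.2.1 + (Matrix.trace (M.Pa * M.postOp σ s.1)).re,
   s.2.2 + (Matrix.trace (M.Pr * M.postOp σ s.1)).re)

/-- Running the NQFA on a word. -/
def run (w : List Alph) : Matrix (Fin M.n) (Fin M.n) ℂ × ℝ × ℝ :=
  w.foldl M.step (M.rho0, 0, 0)

/-- The acceptance probability function of the NQFA. -/
def accProb (w : List Alph) : ℝ := (M.run w).2.1

/-- The total rejection probability of the NQFA. -/
def rejProb (w : List Alph) : ℝ := (M.run w).2.2

/-- The density matrix of the non-halted part of the computation. -/
def curRho (w : List Alph) : Matrix (Fin M.n) (Fin M.n) ℂ := (M.run w).1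

end NQFA

namespace GPFA

variable {Alph : Type} {V : Type*} [AddCommGroup V] [Module ℝ V]

def ofBasis {d : ℕ} (b : Module.Basis (Fin d) ℝ V) (x : V) (T : Alph → V →ₗ[ℝ] V)
    (φ : V →ₗ[ℝ] ℝ) : GPFA Alph where
  m := d
  v := b.repr x
  -- transposed because a GPFA multiplies row vectors from the right
  A σ := (LinearMap.toMatrix b b (T σ))ᵀ
  f := φ ∘ b

theorem ofBasis_val {d : ℕ} (b : Module.Basis (Fin d) ℝ V) (x : V) (T : Alph → V →ₗ[ℝ] V)
    (φ : V →ₗ[ℝ] ℝ) (w : List Alph) :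
    (ofBasis b x T φ).val w = φ (w.foldl (fun y σ => T σ y) x) := by
  change b.repr x ⬝ᵥ (w.map fun σ => (LinearMap.toMatrix b b (T σ))ᵀ).prod *ᵥ (φ ∘ b) = _
  induction w generalizing x with
  | nil =>
    conv_rhs => rw [List.foldl_nil, ← b.sum_repr x, map_sum]
    simp only [List.map_nil, List.prod_nil, Matrix.one_mulVec, dotProduct, Function.comp_apply,
      map_smul, smul_eq_mul]
  | cons σ w ih =>
    rw [List.map_cons, List.prod_cons, ← Matrix.mulVec_mulVec, Matrix.dotProduct_mulVec,
      Matrix.vecMul_transpose, LinearMap.toMatrix_mulVec_repr, ih, List.foldl_cons]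

theorem exists_val_eq_foldl [FiniteDimensional ℝ V] (x : V) (T : Alph → V →ₗ[ℝ] V)
    (φ : V →ₗ[ℝ] ℝ) :
    ∃ G : GPFA Alph, G.m = Module.finrank ℝ V ∧
      ∀ w, G.val w = φ (w.foldl (fun y σ => T σ y) x) :=
  ⟨ofBasis (Module.finBasis ℝ V) x T φ, rfl, ofBasis_val _ x T φ⟩

end GPFA

namespace Matrix

theorem finrank_selfAdjoint_le (𝕜 : Type*) [RCLike 𝕜] (ι : Type*) [Fintype ι] :
    Module.finrank ℝ (selfAdjoint.submodule ℝ (Matrix ι ι 𝕜)) ≤ Fintype.card ι ^ 2 := by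
  -- a Hermitian matrix is recovered from `re X + im X`, its symmetric and antisymmetric parts
  let L : Matrix ι ι 𝕜 →ₗ[ℝ] Matrix ι ι ℝ := RCLike.reLm.mapMatrix + RCLike.imLm.mapMatrix
  have hinj : Function.Injective (L ∘ₗ (selfAdjoint.submodule ℝ (Matrix ι ι 𝕜)).subtype) := by
    rw [← LinearMap.ker_eq_bot, LinearMap.ker_eq_bot']
    rintro ⟨X, hX⟩ hLX
    ext i j
    have hij := congrFun (congrFun hLX i) j
    have hji := congrFun (congrFun hLX j) i
    have hXji : X j i = star (X i j) := by
      rw [← star_apply, (selfAdjoint.mem_iff.mp hX : star X = X)]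
    simp [L, hXji] at hij hji
    apply RCLike.ext <;> simp <;> linarith
  simpa [sq, Module.finrank_matrix] using LinearMap.finrank_le_finrank_of_injective hinj

end Matrix

namespace NQFA

variable {Alph : Type} (M : NQFA Alph)

theorem rho0_isHermitian : M.rho0.IsHermitian := by
  ext i j
  simp [rho0, mul_comm]

theorem postOp_isHermitian (σ : Alph) {X : Matrix (Fin M.n) (Fin M.n) ℂ} (hX : X.IsHermitian) :
    (M.postOp σ X).IsHermitian :=
  isSelfAdjoint_sum _ fun _ _ =>
    isHermitian_mul_mul_conjTranspose _ (isHermitian_mul_mul_conjTranspose _ hX)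

theorem postOp_add (σ : Alph) (X Y : Matrix (Fin M.n) (Fin M.n) ℂ) :
    M.postOp σ (X + Y) = M.postOp σ X + M.postOp σ Y := by
  simp [postOp, mul_add, add_mul, Finset.sum_add_distrib]

theorem postOp_smul (σ : Alph) (c : ℝ) (X : Matrix (Fin M.n) (Fin M.n) ℂ) :
    M.postOp σ (c • X) = c • M.postOp σ X := by
  simp [postOp, Finset.smul_sum]

def linearStep (σ : Alph) :
    (selfAdjoint.submodule ℝ (Matrix (Fin M.n) (Fin M.n) ℂ) × ℝ) →ₗ[ℝ]
      selfAdjoint.submodule ℝ (Matrix (Fin M.n) (Fin M.n) ℂ) × ℝ where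
  toFun s :=
    (⟨M.Pn * M.postOp σ s.1 * M.Pnᴴ,
      isHermitian_mul_mul_conjTranspose _ (M.postOp_isHermitian σ s.1.2)⟩,
     s.2 + (M.Pa * M.postOp σ s.1).trace.re)
  map_add' s t := by
    ext
    · simp [postOp_add, mul_add, add_mul]
    · simp only [Prod.snd_add, Prod.fst_add, Submodule.coe_add, postOp_add, mul_add,
        Matrix.trace_add, Complex.add_re]
      ring
  map_smul' c s := by
    ext
    · simp [postOp_smul]
    · simp only [Prod.smul_snd, smul_eq_mul, Prod.smul_fst, SetLike.val_smul, postOp_smul,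
        Algebra.mul_smul_comm, Matrix.trace_smul, Complex.real_smul, Complex.re_ofReal_mul,
        Real.ringHom_apply]
      ring

theorem foldl_linearStep (s : Matrix (Fin M.n) (Fin M.n) ℂ × ℝ × ℝ) (hs : s.1.IsHermitian)
    (w : List Alph) :
    Prod.map Subtype.val id (w.foldl (fun y σ => M.linearStep σ y) (⟨s.1, hs⟩, s.2.1)) =
      ((w.foldl M.step s).1, (w.foldl M.step s).2.1) := by
  induction w generalizing s with
  | nil => rfl
  | cons σ w ih => exact ih (M.step s σ) _

theorem accProb_eq_foldl_linearStep (w : List Alph) :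
    M.accProb w = (w.foldl (fun y σ => M.linearStep σ y) (⟨M.rho0, M.rho0_isHermitian⟩, 0)).2 :=
  (congrArg Prod.snd (M.foldl_linearStep (M.rho0, 0, 0) M.rho0_isHermitian w)).symm

end NQFA

/-- For every NQFA with `n` states there is a GPFA with `O(n²)` states
(at most `n² + c` for a fixed constant `c`) computing the same
acceptance probability function. -/
theorem nqfa_to_gpfa (Alph : Type) :
    ∃ c : ℕ, ∀ M : NQFA Alph, ∃ G : GPFA Alph,
      G.m ≤ M.n ^ 2 + c ∧ ∀ w : List Alph, G.val w = M.accProb w := by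
  refine ⟨1, fun M => ?_⟩
  obtain ⟨G, hGm, hG⟩ := GPFA.exists_val_eq_foldl (⟨M.rho0, M.rho0_isHermitian⟩, 0)
    M.linearStep (LinearMap.snd ℝ _ ℝ)
  refine ⟨G, ?_, fun w => (hG w).trans (M.accProb_eq_foldl_linearStep w).symm⟩
  rw [hGm, Module.finrank_prod, Module.finrank_self]
  simpa using Nat.add_le_add_right (Matrix.finrank_selfAdjoint_le ℂ (Fin M.n)) 1
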